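/- arXiv:1707.03293 — 3 statements merged into one kernel-verified Lean document; each statement's English description precedes it below -/
import Mathlib

section
/- For real numbers a, b, c, the maximum of F(u,v) = (au+bv)² + (bu+cv)² over the closed unit disc {(u,v) : u²+v² ≤ 1} equals (a² + 2b² + c² + √((a²-c²)² + 4b²(a+c)²))/2. -/
set_option maxHeartbeats 1000000 in
theorem stmt_1 (a b c : ℝ) :
    IsGreatest {z : ℝ | ∃ u v : ℝ, u^2 + v^2 ≤ 1 ∧ z = (a*u + b*v)^2 + (b*u + c*v)^2}
      ((a^2 + 2*b^2 + c^2 + Real.sqrt ((a^2 - c^2)^2 + 4*b^2*(a+c)^2))/2) := by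
  set s := Real.sqrt ((a^2 - c^2)^2 + 4*b^2*(a+c)^2) with hs_def
  have hs0 : 0 ≤ s := Real.sqrt_nonneg _
  have hs2 : s^2 = (a^2 - c^2)^2 + 4*b^2*(a+c)^2 := Real.sq_sqrt (by positivity)
  have hsd : 0 ≤ s + (a^2 - c^2) := by nlinarith [sq_nonneg (b*(a+c)), sq_nonneg (s + (a^2-c^2))]
  constructor
  · -- membership
    by_cases hq : b*(a+c) = 0
    · have hsabs : s^2 = (a^2 - c^2)^2 := by rw [hs2]; nlinarith [hq]
      by_cases hac : c^2 ≤ a^2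
      · have hs : s = a^2 - c^2 := by nlinarith
        refine ⟨1, 0, by norm_num, ?_⟩
        rw [hs]; ring
      · have hs : s = c^2 - a^2 := by nlinarith
        refine ⟨0, 1, by norm_num, ?_⟩
        rw [hs]; ring
    · have hq2 : 0 < (b*(a+c))^2 :=
        lt_of_le_of_ne (sq_nonneg _) (Ne.symm (pow_ne_zero 2 hq))
      have hsp : 0 < s := by nlinarith
      have hsdp : 0 < s + (a^2 - c^2) := by
        rcases lt_or_eq_of_le hsd with h | h
        · exact h
        · exfalso
          have h3 : s*(s+(a^2-c^2)) = 0 := by rw [← h]; ring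
          have h4 : (a^2-c^2)*(s+(a^2-c^2)) = 0 := by rw [← h]; ring
          nlinarith [hq2, hs2, h3, h4]
      set d := a^2 - c^2
      set q := b*(a+c)
      set n := Real.sqrt (2*s*(s+d)) with hn_def
      have hn2 : n^2 = 2*s*(s+d) := Real.sq_sqrt (by positivity)
      have hn0 : 0 < n := Real.sqrt_pos.mpr (by positivity)
      refine ⟨(s+d)/n, 2*q/n, ?_, ?_⟩
      · have e1 : ((s+d)/n)^2 + (2*q/n)^2 = ((s+d)^2 + 4*q^2)/n^2 := by
          field_simp; ring
        rw [e1, hn2]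
        refine le_of_eq ?_
        rw [div_eq_one_iff_eq (by positivity)]
        simp only [d, q]
        linear_combination -hs2
      · have key : (a*(s+d) + b*(2*q))^2 + (b*(s+d) + c*(2*q))^2
            = (a^2 + 2*b^2 + c^2 + s)/2 * (2*s*(s+d)) := by
          simp only [d, q]
          linear_combination (-(s + (a^2-c^2) + (b^2 + c^2))) * hs2
        have expand : (a*((s+d)/n) + b*(2*q/n))^2 + (b*((s+d)/n) + c*(2*q/n))^2
            = ((a*(s+d) + b*(2*q))^2 + (b*(s+d) + c*(2*q))^2)/n^2 := by
          field_simp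
        rw [expand, key, hn2, mul_div_assoc, div_self (by positivity), mul_one]
  · rintro z ⟨u, v, huv, rfl⟩
    have hT : 0 ≤ a^2 + 2*b^2 + c^2 + s := by positivity
    rcases lt_or_eq_of_le hsd with h | h
    · have h2 : 0 ≤ (a^2 + 2*b^2 + c^2 + s) * (1 - (u^2+v^2)) :=
        mul_nonneg hT (by linarith)
      nlinarith [sq_nonneg (2*(b*(a+c))*u - (s+(a^2-c^2))*v), hs2,
        mul_nonneg h.le h2, h]
    · have hs' : s = -(a^2 - c^2) := by linarith
      rw [hs'] at hs2
      have hq0 : b*(a+c) = 0 := by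
        have : (b*(a+c))^2 = 0 := by nlinarith [hs2]
        exact sq_eq_zero_iff.mp this
      have hd : a^2 - c^2 ≤ 0 := by rw [hs'] at hs0; linarith
      have hcross : 2*u*v*(b*(a+c)) = 0 := by rw [hq0]; ring
      have m1 : 0 ≤ (b^2+c^2) * (1 - (u^2+v^2)) := mul_nonneg (by positivity) (by linarith)
      have m2 : 0 ≤ (c^2 - a^2) * u^2 := mul_nonneg (by linarith) (sq_nonneg u)
      nlinarith [hcross, m1, m2, hs']
end

section
/- For t > 1 and (x,y) ≠ (0,0) with x²+y² ≤ 1, the operator norm of the Jacobian matrix J(f^(t))(x,y) (as a linear map from ℝ² to ℝ² with Euclidean norms) equals t/(1+(t-1)√(x²+y²)). -/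
/-!
With `r = √(x² + y²)` and `w = (-y, x)`, so that `‖w‖ = r`, the Jacobian is
`c • (t r • 1 + t (t - 1) • w wᵀ)` with `c = 1 / (r (1 + (t - 1) r)²)`.
For `a, b ≥ 0` the operator `a • 1 + b • w wᵀ` has norm `a + b ‖w‖²`: the triangle inequality and
Cauchy–Schwarz bound it, and `w` is an eigenvector for that eigenvalue.
Here `c (t r + t (t - 1) r²) = t / (1 + (t - 1) r)`.
-/

theorem norm_smul_id_add_smul_smulRight_innerSL {E : Type*} [NormedAddCommGroup E]
    [InnerProductSpace ℝ E] {a b : ℝ} (ha : 0 ≤ a) (hb : 0 ≤ b) {w : E} (hw : w ≠ 0) :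
    ‖a • ContinuousLinearMap.id ℝ E + b • (innerSL ℝ w).smulRight w‖ = a + b * ‖w‖ ^ 2 := by
  set T := a • ContinuousLinearMap.id ℝ E + b • (innerSL ℝ w).smulRight w
  have hT : ∀ v, T v = a • v + (b * inner ℝ w v) • w := fun v => by simp [T, mul_smul]
  apply le_antisymm
  · refine T.opNorm_le_bound (by positivity) fun v => ?_
    calc ‖T v‖ ≤ ‖a • v‖ + ‖(b * inner ℝ w v) • w‖ := hT v ▸ norm_add_le _ _
      _ = a * ‖v‖ + b * |inner ℝ w v| * ‖w‖ := by
          rw [norm_smul, norm_smul, Real.norm_eq_abs, Real.norm_eq_abs, abs_mul,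
            abs_of_nonneg ha, abs_of_nonneg hb]
      _ ≤ a * ‖v‖ + b * (‖w‖ * ‖v‖) * ‖w‖ := by
          gcongr; exact abs_real_inner_le_norm w v
      _ = (a + b * ‖w‖ ^ 2) * ‖v‖ := by ring
  · have hTw : T w = (a + b * ‖w‖ ^ 2) • w := by
      rw [hT, real_inner_self_eq_norm_sq, add_smul]
    have := T.le_opNorm w
    rw [hTw, norm_smul, Real.norm_of_nonneg (by positivity)] at this
    exact le_of_mul_le_mul_right this (norm_pos_iff.mpr hw)

theorem Matrix.toEuclideanCLM_eq_smul_id_add_smul_smulRight_innerSL (a b p q : ℝ) :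
    Matrix.toEuclideanCLM (𝕜 := ℝ) !![a + b * p ^ 2, b * p * q; b * p * q, a + b * q ^ 2] =
      a • ContinuousLinearMap.id ℝ _ + b • (innerSL ℝ !₂[p, q]).smulRight !₂[p, q] := by
  ext v i
  fin_cases i <;>
    simp [Matrix.mulVec, dotProduct, Fin.sum_univ_two, EuclideanSpace.inner_eq_star_dotProduct] <;>
    ring

theorem stmt_7_general (t x y : ℝ) (ht : 1 < t) (hxy : (x, y) ≠ (0, 0)) :
    ‖Matrix.toEuclideanCLM (𝕜 := ℝ) (n := Fin 2)
        ((1 / (Real.sqrt (x^2 + y^2) * (1 + (t-1)*Real.sqrt (x^2 + y^2))^2)) •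
          !![t*Real.sqrt (x^2 + y^2) + t*(t-1)*y^2, t*(1-t)*x*y;
             t*(1-t)*x*y, t*Real.sqrt (x^2 + y^2) + t*(t-1)*x^2])‖
      = t / (1 + (t-1)*Real.sqrt (x^2 + y^2)) := by
  have ht1 : 0 < t - 1 := sub_pos.mpr ht
  have hw : !₂[-y, x] ≠ 0 := by
    contrapose! hxy
    have h0 := congrArg (· 0) hxy
    have h1 := congrArg (· 1) hxy
    simp_all
  have hw_norm : ‖!₂[-y, x]‖ ^ 2 = x ^ 2 + y ^ 2 := by
    simp [EuclideanSpace.norm_sq_eq, Fin.sum_univ_two]; ring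
  have hr : 0 < Real.sqrt (x ^ 2 + y ^ 2) := by
    rw [← hw_norm, Real.sqrt_sq (norm_nonneg _)]; exact norm_pos_iff.mpr hw
  set r := Real.sqrt (x ^ 2 + y ^ 2) with hr_def
  have hs : 0 < 1 + (t - 1) * r := by positivity
  set c := 1 / (r * (1 + (t - 1) * r) ^ 2)
  have hM : c • !![t*r + t*(t-1)*y^2, t*(1-t)*x*y; t*(1-t)*x*y, t*r + t*(t-1)*x^2] =
      !![c*t*r + c*t*(t-1)*(-y)^2, c*t*(t-1)*(-y)*x; c*t*(t-1)*(-y)*x, c*t*r + c*t*(t-1)*x^2] := by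
    ext i j; fin_cases i <;> fin_cases j <;> simp <;> ring
  rw [hM, Matrix.toEuclideanCLM_eq_smul_id_add_smul_smulRight_innerSL,
    norm_smul_id_add_smul_smulRight_innerSL (by positivity) (by positivity) hw, hw_norm,
    ← Real.sq_sqrt (by positivity : 0 ≤ x ^ 2 + y ^ 2), ← hr_def]
  simp only [c]
  field_simp

theorem stmt_7 (t x y : ℝ) (ht : 1 < t) (hxy : (x, y) ≠ (0, 0)) (hle : x^2 + y^2 ≤ 1) :
    ‖Matrix.toEuclideanCLM (𝕜 := ℝ) (n := Fin 2)
        ((1 / (Real.sqrt (x^2 + y^2) * (1 + (t-1)*Real.sqrt (x^2 + y^2))^2)) •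
          !![t*Real.sqrt (x^2 + y^2) + t*(t-1)*y^2, t*(1-t)*x*y;
             t*(1-t)*x*y, t*Real.sqrt (x^2 + y^2) + t*(t-1)*x^2])‖
      = t / (1 + (t-1)*Real.sqrt (x^2 + y^2)) :=
  stmt_7_general t x y ht hxy
end

section
/- For t > 1 and all (x,y) with 0 < x²+y² ≤ 1, |∂_x(Re f_t)(x,y) - 1| ≤ t² - 1, where ∂_x(Re f_t)(x,y) = (t√(x²+y²) + t(t-1)y²)/(√(x²+y²)(1+(t-1)√(x²+y²))²). -/
theorem stmt_16 (t x y : ℝ) (ht : 1 < t) (h0 : 0 < x^2 + y^2) (h1 : x^2 + y^2 ≤ 1) :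
    |(t*Real.sqrt (x^2 + y^2) + t*(t-1)*y^2) /
        (Real.sqrt (x^2 + y^2) * (1 + (t-1)*Real.sqrt (x^2 + y^2))^2) - 1|
      ≤ t^2 - 1 := by
  set r := Real.sqrt (x^2 + y^2) with hrdef
  have hr : 0 < r := Real.sqrt_pos.mpr h0
  have hr2 : r^2 = x^2 + y^2 := Real.sq_sqrt h0.le
  have hr1 : r ≤ 1 := Real.sqrt_le_one.mpr h1
  have hy : y^2 ≤ r^2 := by nlinarith
  have hu : 0 ≤ (t-1)*r := by nlinarith
  have hu1 : (t-1)*r ≤ t-1 := by nlinarith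
  have hD : 0 < r * (1 + (t-1)*r)^2 := by positivity
  rw [abs_le]
  constructor
  · have h : (2 - t^2) ≤ (t*r + t*(t-1)*y^2) / (r * (1 + (t-1)*r)^2) := by
      rw [le_div_iff₀ hD]
      nlinarith [mul_nonneg hu hu, mul_nonneg (mul_nonneg hu hu) hu,
        mul_nonneg (mul_nonneg hr.le (by nlinarith : (0:ℝ) ≤ t*(t-1))) (sq_nonneg y),
        sq_nonneg (t-1), mul_pos hr (by positivity : (0:ℝ) < t)]
    linarith
  · rw [sub_le_iff_le_add, div_le_iff₀ hD]
    have hN : t*r + t*(t-1)*y^2 ≤ t*r*(1 + (t-1)*r) := by nlinarith [mul_nonneg (by nlinarith : (0:ℝ) ≤ t*(t-1)) (by linarith : (0:ℝ) ≤ r^2 - y^2)]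
    have h2 : t*r*(1 + (t-1)*r) ≤ t^2*(r * (1 + (t-1)*r)^2) := by
      nlinarith [mul_nonneg (mul_nonneg hr.le hu) (by nlinarith : (0:ℝ) ≤ t*(1+(t-1)*r) - 1),
        mul_pos hr (by nlinarith : (0:ℝ) < t*(1+(t-1)*r) - 1)]
    nlinarith
end
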